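/- CR(5,3) = 11. That is: every edge-coloring of the complete graph K_11 (with arbitrarily many colors) contains an orderable copy of K_5 or a rainbow copy of K_3, and there exists an edge-coloring of K_10 containing neither an orderable K_5 nor a rainbow K_3. -/

import Mathlib

/-- A coloring `c` of the edges of the graph on `Fin m` with adjacency relation `Adj` is
*orderable* if there is a linear ordering of the vertices (given by the ranking
permutation `π`) such that the color of every edge is determined by its `π`-smaller
endpoint: if `i` precedes both `j` and `k`, then the edges `ij` and `ik` get the same color. -/
def OrderableColoring {m : ℕ} (Adj : Fin m → Fin m → Prop) (c : Fin m → Fin m → ℕ) : Prop :=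
  ∃ π : Equiv.Perm (Fin m),
    ∀ i j k : Fin m, Adj i j → Adj i k → π i < π j → π i < π k → c i j = c i k

/-- The edge-coloring `χ` of the complete graph on `Fin n` contains an orderable copy
of the complete graph `K p`. -/
def HasOrderableClique (p n : ℕ) (χ : Sym2 (Fin n) → ℕ) : Prop :=
  ∃ f : Fin p → Fin n, Function.Injective f ∧
    OrderableColoring (fun i j => i ≠ j) (fun i j => χ s(f i, f j))

/-- The edge-coloring `χ` of the complete graph on `Fin n` contains a rainbow copy
of the complete graph `K t`: all edges of the copy get pairwise distinct colors. -/
def HasRainbowClique (t n : ℕ) (χ : Sym2 (Fin n) → ℕ) : Prop :=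
  ∃ f : Fin t → Fin n, Function.Injective f ∧
    ∀ i j k l : Fin t, i < j → k < l →
      χ s(f i, f j) = χ s(f k, f l) → i = k ∧ j = l

/-!
Suppose a colouring of `K₁₁` has neither an orderable `K₅` nor a rainbow triangle. Then every
triangle has an apex whose two edges share a colour, and a "fan" (a vertex `v` sending one colour
to `u` and three more vertices, to which `u` also sends one colour) cannot exist, since `v`, `u`
and an apex-first ordering of the triangle on the other three would be an orderable `K₅`.
Excluding fans forces every colour class at a vertex `x` to have at most 5 elements, and at most 3
once another class has 5. So the 10 neighbours of `x` split as in `5 + 3 + 2` at best, and `x` is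
the apex of at most 14 monochromatic cherries; but the `165 > 11 · 14` triangles each need one.

For `K₁₀`, blow up the 2-colouring of `K₅` by a pentagon and a pentagram.
-/
namespace CanonicalRamsey

open Finset

variable {n : ℕ} {χ : Sym2 (Fin n) → ℕ}

def IsOrderedMono {p : ℕ} (χ : Sym2 (Fin n) → ℕ) (f : Fin p → Fin n) : Prop :=
  ∀ i j k : Fin p, i < j → i < k → χ s(f i, f j) = χ s(f i, f k)

theorem hasOrderableClique_iff {p : ℕ} :
    HasOrderableClique p n χ ↔
      ∃ f : Fin p → Fin n, Function.Injective f ∧ IsOrderedMono χ f := by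
  constructor
  · rintro ⟨f, hf, π, hπ⟩
    refine ⟨f ∘ π.symm, hf.comp π.symm.injective, fun i j k hij hik => ?_⟩
    simpa using hπ (π.symm i) (π.symm j) (π.symm k) (by simpa using hij.ne)
      (by simpa using hik.ne) (by simpa using hij) (by simpa using hik)
  · rintro ⟨f, hf, hmono⟩
    exact ⟨f, hf, Equiv.refl _, fun i j k _ _ => hmono i j k⟩

theorem IsOrderedMono.cons {p : ℕ} {f : Fin p → Fin n} (hf : IsOrderedMono χ f) {v : Fin n}
    {c : ℕ} (hv : ∀ i, χ s(v, f i) = c) :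
    IsOrderedMono χ (Fin.cons v f : Fin (p + 1) → Fin n) := by
  intro i j k hij hik
  obtain ⟨j, rfl⟩ := Fin.exists_succ_eq.mpr (ne_bot_of_gt hij)
  obtain ⟨k, rfl⟩ := Fin.exists_succ_eq.mpr (ne_bot_of_gt hik)
  cases i using Fin.cases with
  | zero => simp [hv]
  | succ i => simpa using hf i j k (by simpa using hij) (by simpa using hik)

theorem hasRainbowClique_three_iff :
    HasRainbowClique 3 n χ ↔ ∃ x y z : Fin n, x ≠ y ∧ x ≠ z ∧ y ≠ z ∧
      χ s(x, y) ≠ χ s(x, z) ∧ χ s(x, y) ≠ χ s(y, z) ∧ χ s(x, z) ≠ χ s(y, z) := by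
  constructor
  · rintro ⟨f, hf, hrb⟩
    refine ⟨f 0, f 1, f 2, hf.ne (by decide), hf.ne (by decide), hf.ne (by decide),
      fun h => ?_, fun h => ?_, fun h => ?_⟩
    · simpa using hrb 0 1 0 2 (by decide) (by decide) h
    · simpa using hrb 0 1 1 2 (by decide) (by decide) h
    · simpa using hrb 0 2 1 2 (by decide) (by decide) h
  · rintro ⟨x, y, z, hxy, hxz, hyz, h₁, h₂, h₃⟩
    refine ⟨![x, y, z], ?_, ?_⟩
    · intro i j hij
      fin_cases i <;> fin_cases j <;> simp_all
    · intro i j k l hij hkl h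
      fin_cases i <;> fin_cases j <;> fin_cases k <;> fin_cases l <;> simp_all

theorem eq_or_eq_or_eq_of_not_hasRainbowClique (hR : ¬ HasRainbowClique 3 n χ) {x y z : Fin n}
    (hxy : x ≠ y) (hxz : x ≠ z) (hyz : y ≠ z) :
    χ s(x, y) = χ s(x, z) ∨ χ s(y, x) = χ s(y, z) ∨ χ s(z, x) = χ s(z, y) := by
  by_contra! h
  refine hR (hasRainbowClique_three_iff.mpr ⟨x, y, z, hxy, hxz, hyz, h.1, ?_, ?_⟩)
  · rw [Sym2.eq_swap]; exact h.2.1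
  · rw [Sym2.eq_swap (a := x), Sym2.eq_swap (a := y)]; exact h.2.2

theorem exists_isOrderedMono_three (hR : ¬ HasRainbowClique 3 n χ) {T : Finset (Fin n)}
    (hT : 2 < T.card) :
    ∃ g : Fin 3 → Fin n, Function.Injective g ∧ IsOrderedMono χ g ∧ ∀ i, g i ∈ T := by
  have cherry : ∀ a ∈ T, ∀ b ∈ T, ∀ d ∈ T, a ≠ b → a ≠ d → b ≠ d → χ s(a, b) = χ s(a, d) →
      ∃ g : Fin 3 → Fin n, Function.Injective g ∧ IsOrderedMono χ g ∧ ∀ i, g i ∈ T := by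
    intro a ha b hb d hd hab had hbd h
    refine ⟨![a, b, d], ?_, ?_, ?_⟩
    · intro i j hij
      fin_cases i <;> fin_cases j <;> simp_all
    · intro i j k hij hik
      fin_cases i <;> fin_cases j <;> fin_cases k <;> simp_all
    · intro i
      fin_cases i <;> simpa
  obtain ⟨a, b, d, ha, hb, hd, hab, had, hbd⟩ := two_lt_card_iff.mp hT
  rcases eq_or_eq_or_eq_of_not_hasRainbowClique hR hab had hbd with h | h | h
  · exact cherry a ha b hb d hd hab had hbd h
  · exact cherry b hb a ha d hd hab.symm hbd had h
  · exact cherry d hd a ha b hb had.symm hbd.symm hab h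

theorem card_le_two_of_fan (hO : ¬ HasOrderableClique 5 n χ) (hR : ¬ HasRainbowClique 3 n χ)
    {v u : Fin n} {c : ℕ} {T : Finset (Fin n)} (hvu : v ≠ u) (hvT : v ∉ T) (huT : u ∉ T)
    (hv : ∀ t ∈ T, χ s(v, t) = χ s(v, u)) (hu : ∀ t ∈ T, χ s(u, t) = c) : T.card ≤ 2 := by
  by_contra! hT
  obtain ⟨g, hg, hgmono, hgT⟩ := exists_isOrderedMono_three hR hT
  have hgv : ∀ i, g i ≠ v := fun i h => hvT (h ▸ hgT i)
  have hgu : ∀ i, g i ≠ u := fun i h => huT (h ▸ hgT i)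
  refine hO (hasOrderableClique_iff.mpr ⟨Fin.cons v (Fin.cons u g), ?_, ?_⟩)
  · simp [Fin.cons_injective_iff, Fin.range_cons, hg, hvu, hgv, hgu]
  · refine (hgmono.cons fun i => hu _ (hgT i)).cons (c := χ s(v, u)) fun i => ?_
    cases i using Fin.cases <;> simp [hv _ (hgT _)]

def colorNeighborFinset (χ : Sym2 (Fin n) → ℕ) (x : Fin n) (c : ℕ) : Finset (Fin n) :=
  {y ∈ univ.erase x | χ s(x, y) = c}

@[simp]
theorem mem_colorNeighborFinset {x y : Fin n} {c : ℕ} :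
    y ∈ colorNeighborFinset χ x c ↔ y ≠ x ∧ χ s(x, y) = c := by
  simp [colorNeighborFinset]

theorem color_eq_of_cherry (hR : ¬ HasRainbowClique 3 n χ) {y a b d : Fin n}
    (hya : y ≠ a) (hyb : y ≠ b) (hyd : y ≠ d) (hab : a ≠ b) (had : a ≠ d)
    (hyab : χ s(y, a) ≠ χ s(y, b)) (hyad : χ s(y, a) ≠ χ s(y, d))
    (hybd : χ s(y, b) ≠ χ s(y, d)) (h : χ s(a, b) = χ s(a, d)) : χ s(a, b) = χ s(a, y) := by
  by_contra hne
  have third : ∀ w, y ≠ w → a ≠ w → χ s(y, a) ≠ χ s(y, w) → χ s(a, w) ≠ χ s(a, y) →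
      χ s(y, w) = χ s(a, w) := by
    intro w hyw haw hyaw hawy
    rcases eq_or_eq_or_eq_of_not_hasRainbowClique hR hya hyw haw with h₁ | h₁ | h₁
    · exact absurd h₁ hyaw
    · exact absurd h₁.symm hawy
    · rwa [Sym2.eq_swap (a := w), Sym2.eq_swap (a := w)] at h₁
  exact hybd (by rw [third b hyb hab hyab hne, third d hyd had hyad (h ▸ hne), h])

-- An apex `a` would send one colour to `y`, `b`, `d` (`color_eq_of_cherry`), a fan from `x`.
theorem color_ne_of_colors_ne (hO : ¬ HasOrderableClique 5 n χ) (hR : ¬ HasRainbowClique 3 n χ)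
    {x y a b d : Fin n} {c : ℕ} (hy : y ∈ colorNeighborFinset χ x c)
    (ha : a ∈ (colorNeighborFinset χ x c).erase y) (hb : b ∈ (colorNeighborFinset χ x c).erase y)
    (hd : d ∈ (colorNeighborFinset χ x c).erase y) (hyab : χ s(y, a) ≠ χ s(y, b))
    (hyad : χ s(y, a) ≠ χ s(y, d)) (hybd : χ s(y, b) ≠ χ s(y, d)) :
    χ s(a, b) ≠ χ s(a, d) := by
  intro h
  set S := colorNeighborFinset χ x c
  have hSx : ∀ t ∈ S, x ≠ t ∧ χ s(x, t) = c := fun t ht =>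
    ⟨((mem_colorNeighborFinset.mp ht).1).symm, (mem_colorNeighborFinset.mp ht).2⟩
  obtain ⟨hay, haS⟩ := mem_erase.mp ha
  obtain ⟨hby, hbS⟩ := mem_erase.mp hb
  obtain ⟨hdy, hdS⟩ := mem_erase.mp hd
  have hapex := color_eq_of_cherry hR hay.symm hby.symm hdy.symm (ne_of_apply_ne (χ s(y, ·)) hyab)
    (ne_of_apply_ne (χ s(y, ·)) hyad) hyab hyad hybd h
  have hTS : ∀ t ∈ ({y, b, d} : Finset (Fin n)), t ∈ S := by simp [hy, hbS, hdS]
  have hfan := card_le_two_of_fan hO hR (u := a) (c := χ s(a, y)) (T := {y, b, d})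
    (hSx a haS).1 (fun h => (hSx x (hTS x h)).1 rfl)
    (by simp [hay, ne_of_apply_ne (χ s(y, ·)) hyab, ne_of_apply_ne (χ s(y, ·)) hyad])
    (fun t ht => by rw [(hSx t (hTS t ht)).2, (hSx a haS).2])
    (fun t ht => by
      simp only [mem_insert, mem_singleton] at ht
      rcases ht with rfl | rfl | rfl
      exacts [rfl, hapex, h.symm.trans hapex])
  rw [card_eq_three.mpr ⟨y, b, d, hby.symm, hdy.symm, ne_of_apply_ne (χ s(y, ·)) hybd, rfl⟩] at hfan
  omega

theorem card_colorNeighborFinset_le_five (hO : ¬ HasOrderableClique 5 n χ)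
    (hR : ¬ HasRainbowClique 3 n χ) (x : Fin n) (c : ℕ) :
    (colorNeighborFinset χ x c).card ≤ 5 := by
  set S := colorNeighborFinset χ x c
  by_contra! hS
  obtain ⟨y, hy⟩ : S.Nonempty := card_pos.mp (by omega)
  set O := S.erase y
  have hSx : ∀ t ∈ S, t ≠ x ∧ χ s(x, t) = c := fun t ht => mem_colorNeighborFinset.mp ht
  have hfiber : ∀ e, {t ∈ O | χ s(y, t) = e}.card ≤ 2 := fun e =>
    card_le_two_of_fan hO hR (hSx y hy).1.symm
      (fun h => (hSx x (mem_of_mem_erase (mem_filter.mp h).1)).1 rfl)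
      (fun h => notMem_erase y S (mem_filter.mp h).1)
      (fun t ht => by rw [(hSx t (mem_of_mem_erase (mem_filter.mp ht).1)).2, (hSx y hy).2])
      (fun t ht => (mem_filter.mp ht).2)
  have hcolors : 2 < (O.image fun t => χ s(y, t)).card := by
    have := card_le_mul_card_image O 2 fun e _ => hfiber e
    rw [card_erase_of_mem hy] at this
    omega
  obtain ⟨e₁, e₂, e₃, he₁, he₂, he₃, h₁₂, h₁₃, h₂₃⟩ := two_lt_card_iff.mp hcolors
  obtain ⟨r₁, hr₁, rfl⟩ := mem_image.mp he₁
  obtain ⟨r₂, hr₂, rfl⟩ := mem_image.mp he₂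
  obtain ⟨r₃, hr₃, rfl⟩ := mem_image.mp he₃
  rcases eq_or_eq_or_eq_of_not_hasRainbowClique hR (ne_of_apply_ne (χ s(y, ·)) h₁₂)
    (ne_of_apply_ne (χ s(y, ·)) h₁₃) (ne_of_apply_ne (χ s(y, ·)) h₂₃) with h | h | h
  · exact color_ne_of_colors_ne hO hR hy hr₁ hr₂ hr₃ h₁₂ h₁₃ h₂₃ h
  · exact color_ne_of_colors_ne hO hR hy hr₂ hr₁ hr₃ h₁₂.symm h₂₃ h₁₃ h
  · exact color_ne_of_colors_ne hO hR hy hr₃ hr₁ hr₂ h₁₃.symm h₂₃.symm h₁₂ h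

-- Count the pairs `(u, w)` of the two classes with `χ s(u, w) ≠ c`: at most two `c`-edges leave
-- each `u` (fan `u, x`), and at most two non-`c` edges, necessarily coloured `d`, reach each `w`
-- (fan `w, x`).
theorem card_mul_card_sub_two_le (hO : ¬ HasOrderableClique 5 n χ)
    (hR : ¬ HasRainbowClique 3 n χ) (x : Fin n) {c d : ℕ} (hcd : c ≠ d) :
    (colorNeighborFinset χ x c).card * ((colorNeighborFinset χ x d).card - 2) ≤
      (colorNeighborFinset χ x d).card * 2 := by
  set A := colorNeighborFinset χ x c
  set B := colorNeighborFinset χ x d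
  have hA : ∀ u ∈ A, u ≠ x ∧ χ s(x, u) = c := fun u hu => mem_colorNeighborFinset.mp hu
  have hB : ∀ w ∈ B, w ≠ x ∧ χ s(x, w) = d := fun w hw => mem_colorNeighborFinset.mp hw
  have hAB : ∀ u ∈ A, u ∉ B := fun u hu hu' => hcd ((hA u hu).2.symm.trans (hB u hu').2)
  apply card_mul_le_card_mul fun u w => χ s(u, w) ≠ c
  · intro u hu
    have hfan : {w ∈ B | χ s(u, w) = c}.card ≤ 2 :=
      card_le_two_of_fan hO hR (hA u hu).1 (fun h => hAB u hu (mem_filter.mp h).1)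
        (fun h => (hB x (mem_filter.mp h).1).1 rfl)
        (fun w hw => by rw [(mem_filter.mp hw).2, Sym2.eq_swap, (hA u hu).2])
        (fun w hw => (hB w (mem_filter.mp hw).1).2)
    have := card_filter_add_card_filter_not (s := B) (p := fun w => χ s(u, w) = c)
    simp only [bipartiteAbove, ne_eq]
    omega
  · intro w hw
    refine card_le_two_of_fan hO hR (hB w hw).1 (fun h => hAB w (mem_filter.mp h).1 hw)
      (fun h => (hA x (mem_filter.mp h).1).1 rfl) (fun u hu => ?_)
      (fun u hu => (hA u (mem_filter.mp hu).1).2)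
    obtain ⟨huA, huc⟩ := mem_filter.mp hu
    rcases eq_or_eq_or_eq_of_not_hasRainbowClique hR (hA u huA).1.symm (hB w hw).1.symm
      (fun h => hAB u huA (h ▸ hw)) with h | h | h
    · exact absurd (((hA u huA).2.symm.trans h).trans (hB w hw).2) hcd
    · exact absurd (h.symm.trans (by rw [Sym2.eq_swap, (hA u huA).2])) huc
    · exact h.symm

-- The extremal profile is `5 + 3 + 2`.
theorem sum_choose_two_le_fourteen {ι : Type*} [DecidableEq ι] (I : Finset ι) (m : ι → ℕ)
    (hpos : ∀ c ∈ I, 0 < m c) (hle : ∀ c ∈ I, m c ≤ 5) (hsum : ∑ c ∈ I, m c = 10)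
    (hpair : ∀ c ∈ I, ∀ d ∈ I, c ≠ d → m c * (m d - 2) ≤ m d * 2) :
    ∑ c ∈ I, (m c).choose 2 ≤ 14 := by
  by_cases h5 : ∃ c ∈ I, m c = 5
  · obtain ⟨c, hc, hc5⟩ := h5
    have hrest : ∀ d ∈ I.erase c, 0 < m d ∧ m d ≤ 3 := fun d hd => by
      obtain ⟨hdc, hdI⟩ := mem_erase.mp hd
      have := hpair c hc d hdI hdc.symm
      rw [hc5] at this
      exact ⟨hpos d hdI, by omega⟩
    have hrest_sum : ∑ d ∈ I.erase c, m d = 5 := by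
      have := sum_erase_add I m hc
      omega
    have hcard : 2 ≤ (I.erase c).card := by
      have : ∑ d ∈ I.erase c, m d ≤ ∑ _d ∈ I.erase c, 3 := sum_le_sum fun d hd => (hrest d hd).2
      rw [sum_const, smul_eq_mul] at this
      omega
    have hterm : ∑ d ∈ I.erase c, (2 * (m d).choose 2 + 3) ≤ ∑ d ∈ I.erase c, 3 * m d :=
      sum_le_sum fun d hd => by
        obtain ⟨h₀, h₃⟩ := hrest d hd
        interval_cases m d <;> decide
    rw [sum_add_distrib, ← mul_sum, ← mul_sum, sum_const, hrest_sum, smul_eq_mul] at hterm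
    rw [← sum_erase_add I _ hc, hc5]
    have : (5 : ℕ).choose 2 = 10 := rfl
    omega
  · push Not at h5
    have h4 : ∀ c ∈ I, m c ≤ 4 := fun c hc => by
      have := hle c hc
      have := h5 c hc
      omega
    have hcard : 3 ≤ I.card := by
      have : ∑ c ∈ I, m c ≤ ∑ _c ∈ I, 4 := sum_le_sum h4
      rw [sum_const, smul_eq_mul] at this
      omega
    have hterm : ∑ c ∈ I, ((m c).choose 2 + 2) ≤ ∑ c ∈ I, 2 * m c :=
      sum_le_sum fun c hc => by
        have := hpos c hc
        have := h4 c hc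
        interval_cases m c <;> decide
    rw [sum_add_distrib, ← mul_sum, sum_const, hsum, smul_eq_mul] at hterm
    omega

theorem choose_three_le_sum_choose_two (hR : ¬ HasRainbowClique 3 n χ) :
    n.choose 3 ≤ ∑ x, ∑ c ∈ (univ.erase x).image (fun y => χ s(x, y)),
      (colorNeighborFinset χ x c).card.choose 2 := by
  set cover : Finset (Finset (Fin n)) := univ.biUnion fun x =>
    ((univ.erase x).image fun y => χ s(x, y)).biUnion fun c =>
      ((colorNeighborFinset χ x c).powersetCard 2).image (insert x)
  have cherry : ∀ a b d : Fin n, a ≠ b → a ≠ d → b ≠ d → χ s(a, b) = χ s(a, d) →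
      {a, b, d} ∈ cover := by
    intro a b d hab had hbd h
    simp only [cover, mem_biUnion, mem_image, mem_univ, true_and]
    refine ⟨a, _, ⟨b, mem_erase.mpr ⟨hab.symm, mem_univ b⟩, rfl⟩, {b, d}, ?_, rfl⟩
    rw [mem_powersetCard, card_pair hbd]
    refine ⟨fun t ht => ?_, rfl⟩
    simp only [mem_insert, mem_singleton] at ht
    rcases ht with rfl | rfl
    · simp [hab.symm]
    · simp [had.symm, h]
  have hcover : univ.powersetCard 3 ⊆ cover := by
    intro T hT
    obtain ⟨a, b, d, hab, had, hbd, rfl⟩ := card_eq_three.mp (mem_powersetCard.mp hT).2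
    rcases eq_or_eq_or_eq_of_not_hasRainbowClique hR hab had hbd with h | h | h
    · exact cherry a b d hab had hbd h
    · rw [insert_comm]
      exact cherry b a d hab.symm hbd had h
    · convert cherry d a b had.symm hbd.symm hab h using 1
      ext
      simp only [mem_insert, mem_singleton]
      tauto
  calc n.choose 3 = (univ.powersetCard 3 : Finset (Finset (Fin n))).card := by simp
    _ ≤ cover.card := card_le_card hcover
    _ ≤ _ := card_biUnion_le.trans <| sum_le_sum fun x _ => card_biUnion_le.trans <|
      sum_le_sum fun c _ => card_image_le.trans (card_powersetCard 2 _).le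

theorem hasOrderableClique_or_hasRainbowClique_eleven (χ : Sym2 (Fin 11) → ℕ) :
    HasOrderableClique 5 11 χ ∨ HasRainbowClique 3 11 χ := by
  by_contra! h
  obtain ⟨hO, hR⟩ := h
  have hvertex : ∀ x, ∑ c ∈ (univ.erase x).image (fun y => χ s(x, y)),
      (colorNeighborFinset χ x c).card.choose 2 ≤ 14 := fun x =>
    sum_choose_two_le_fourteen _ _
      (fun c hc => by
        obtain ⟨y, hy, rfl⟩ := mem_image.mp hc
        exact card_pos.mpr ⟨y, by simpa using hy⟩)
      (fun c _ => card_colorNeighborFinset_le_five hO hR x c)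
      ((card_eq_sum_card_image _ (univ.erase x)).symm.trans (by simp))
      (fun c _ d _ hcd => card_mul_card_sub_two_le hO hR x hcd)
  have := (choose_three_le_sum_choose_two hR).trans (sum_le_sum fun x _ => hvertex x)
  simp only [sum_const, card_univ, Fintype.card_fin, smul_eq_mul] at this
  exact absurd this (by decide)

-- Vertices `2k, 2k + 1` double vertex `k` of `K₅`; pentagon edges get colour 0, pentagram edges
-- colour 1, and each doubling edge its own colour `2 + k`.
def blowupColor (i j : Fin 10) : ℕ :=
  if (i : ℕ) / 2 = j / 2 then 2 + i / 2
  else if ((i : ℕ) / 2 + 1) % 5 = j / 2 ∨ ((j : ℕ) / 2 + 1) % 5 = i / 2 then 0 else 1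

theorem blowupColor_comm (i j : Fin 10) : blowupColor i j = blowupColor j i := by
  revert i j; decide

def blowupColoring : Sym2 (Fin 10) → ℕ := Sym2.lift ⟨blowupColor, blowupColor_comm⟩

theorem not_hasRainbowClique_blowupColoring : ¬ HasRainbowClique 3 10 blowupColoring := by
  rw [hasRainbowClique_three_iff]
  decide

-- Nested so that `decide` abandons a branch as soon as one condition fails.
theorem blowupColor_no_fan : ∀ v u : Fin 10, v ≠ u → ∀ t₁ : Fin 10,
    (v ≠ t₁ ∧ u ≠ t₁ ∧ blowupColor v u = blowupColor v t₁) → ∀ t₂ : Fin 10,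
    (v ≠ t₂ ∧ u ≠ t₂ ∧ t₁ ≠ t₂ ∧ blowupColor v u = blowupColor v t₂ ∧
      blowupColor u t₁ = blowupColor u t₂) → ∀ t₃ : Fin 10,
    (v ≠ t₃ ∧ u ≠ t₃ ∧ t₁ ≠ t₃ ∧ t₂ ≠ t₃ ∧ blowupColor v u = blowupColor v t₃ ∧
      blowupColor u t₁ = blowupColor u t₃) → False := by
  decide

theorem not_hasOrderableClique_blowupColoring : ¬ HasOrderableClique 5 10 blowupColoring := by
  rw [hasOrderableClique_iff]
  rintro ⟨w, hw, hmono⟩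
  have ne : ∀ i j : Fin 5, i < j → w i ≠ w j := fun i j hij => hw.ne hij.ne
  exact blowupColor_no_fan (w 0) (w 1) (ne 0 1 (by decide)) (w 2)
    ⟨ne 0 2 (by decide), ne 1 2 (by decide), hmono 0 1 2 (by decide) (by decide)⟩ (w 3)
    ⟨ne 0 3 (by decide), ne 1 3 (by decide), ne 2 3 (by decide),
      hmono 0 1 3 (by decide) (by decide), hmono 1 2 3 (by decide) (by decide)⟩ (w 4)
    ⟨ne 0 4 (by decide), ne 1 4 (by decide), ne 2 4 (by decide), ne 3 4 (by decide),
      hmono 0 1 4 (by decide) (by decide), hmono 1 2 4 (by decide) (by decide)⟩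

end CanonicalRamsey

/-- CR(5,3) = 11. -/
theorem CR_5_3 :
    (∀ χ : Sym2 (Fin 11) → ℕ, HasOrderableClique 5 11 χ ∨ HasRainbowClique 3 11 χ) ∧
    (∃ χ : Sym2 (Fin 10) → ℕ,
      ¬ HasOrderableClique 5 10 χ ∧ ¬ HasRainbowClique 3 10 χ) :=
  ⟨CanonicalRamsey.hasOrderableClique_or_hasRainbowClique_eleven,
    ⟨CanonicalRamsey.blowupColoring, CanonicalRamsey.not_hasOrderableClique_blowupColoring,
      CanonicalRamsey.not_hasRainbowClique_blowupColoring⟩⟩
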